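/- arXiv:1610.03395 — 4 statements merged into one kernel-verified Lean document; each statement's English description precedes it below -/
import Mathlib

section
/- Let R be a commutative ring and M a finitely generated R-module. If for every R-module N the natural map M ⊗_R N → Hom_R(M*, N) is injective, then M is a projective R-module. -/
/-!
Choose generators `s₁, …, sₙ` of `M` and let `P ⊆ Mⁿ` consist of the tuples `(g sᵢ)ᵢ` with `g` in
the image of `M* ⊗ M → End M`. In `M ⊗ Hom(M, Mⁿ/P)` the element `θ = ∑ sᵢ ⊗ (x ↦ [x eᵢ])` is sent
to `w ↦ (x ↦ [(w sᵢ • x)ᵢ]) = 0`, so `θ = 0`. Evaluating `θ` gives `[(sᵢ)ᵢ] = 0`, i.e. `sᵢ = g sᵢ`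
for some `g` in the image; as the `sᵢ` generate, `g = 1`, and the dual basis lemma makes `M`
projective.
-/

open TensorProduct

/-- The natural map `M ⊗ N → Hom(M*, N)`, `m ⊗ n ↦ (w ↦ w m • n)`. -/
noncomputable def natMap (R : Type*) [CommRing R] (M : Type*) [AddCommGroup M] [Module R M]
    (N : Type*) [AddCommGroup N] [Module R N] :
    M ⊗[R] N →ₗ[R] ((M →ₗ[R] R) →ₗ[R] N) :=
  (dualTensorHom R (Module.Dual R M) N).comp (LinearMap.rTensor N (Module.Dual.eval R M))

section

variable {R M N N' ι : Type*} [CommRing R] [AddCommGroup M] [Module R M]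
  [AddCommGroup N] [Module R N] [AddCommGroup N'] [Module R N']

@[simp]
lemma natMap_tmul (x : M) (y : N) (w : M →ₗ[R] R) : natMap R M N (x ⊗ₜ y) w = w x • y := by
  simp [natMap]

lemma natMap_lTensor (f : N →ₗ[R] N') (t : M ⊗[R] N) :
    natMap R M N' (f.lTensor M t) = f ∘ₗ natMap R M N t := by
  induction t using TensorProduct.induction_on with
  | zero => simp
  | tmul x y => ext w; simp
  | add t t' ht ht' => simp [ht, ht', LinearMap.comp_add]

lemma natMap_injective_of_linearEquiv (e : N ≃ₗ[R] N') (h : Function.Injective (natMap R M N)) :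
    Function.Injective (natMap R M N') := by
  have hcomm : ⇑(natMap R M N') ∘ e.lTensor M = e.congrRight ∘ natMap R M N :=
    funext (natMap_lTensor e.toLinearMap)
  rwa [← EquivLike.injective_comp (e.lTensor M), hcomm, EquivLike.comp_injective]

theorem Module.Finite.small_linearMap [Module.Finite R M] [Small.{w} N] :
    Small.{w} (M →ₗ[R] N) := by
  obtain ⟨n, s, hs⟩ := Module.Finite.exists_fin (R := R) (M := M)
  exact small_of_injective (f := fun φ : M →ₗ[R] N => φ ∘ s)
    fun φ ψ h => LinearMap.ext_on_range hs (congrFun h)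

lemma one_mem_range_dualTensorHom_of_mem_map {s : ι → M}
    (hs : Submodule.span R (Set.range s) = ⊤)
    (h : s ∈ (LinearMap.range (dualTensorHom R M M)).map
      (LinearMap.pi fun i => LinearMap.applyₗ (s i))) :
    1 ∈ LinearMap.range (dualTensorHom R M M) := by
  obtain ⟨g, hg, hgs⟩ := h
  rwa [LinearMap.ext_on_range (f := g) (g := 1) hs fun i => congrFun hgs i] at hg

lemma mem_of_natMap_injective [Fintype ι] [DecidableEq ι] (s : ι → M) (P : Submodule R (ι → M))
    (hP : ∀ (w : Module.Dual R M) (x : M), (fun i => w (s i) • x) ∈ P)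
    (h : Function.Injective (natMap R M (M →ₗ[R] (ι → M) ⧸ P))) : s ∈ P := by
  set θ := ∑ i, s i ⊗ₜ[R] (P.mkQ ∘ₗ LinearMap.single R (fun _ => M) i)
  have hθ : natMap R M _ θ = 0 := by
    ext w x
    have hsum : ∑ i, w (s i) • Pi.single i x = fun i => w (s i) • x := by
      ext j; simp [Pi.single_apply]
    simp only [θ, map_sum, LinearMap.coe_sum, Finset.sum_apply, natMap_tmul, LinearMap.smul_apply,
      LinearMap.comp_apply, LinearMap.coe_single, LinearMap.zero_apply]
    simp_rw [← map_smul, ← map_sum, hsum, Submodule.mkQ_apply, Submodule.Quotient.mk_eq_zero]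
    exact hP w x
  have hθ_eq_zero : θ = 0 := h (by rw [hθ, map_zero])
  have hevalθ := congrArg (TensorProduct.lift LinearMap.applyₗ) hθ_eq_zero
  simp only [θ, map_sum, lift.tmul, LinearMap.applyₗ_apply_apply, LinearMap.comp_apply,
    LinearMap.coe_single, map_zero] at hevalθ
  rwa [← map_sum, Finset.univ_sum_single, Submodule.mkQ_apply,
    Submodule.Quotient.mk_eq_zero] at hevalθ

end

theorem stmt5 (R : Type u) [CommRing R] (M : Type v) [AddCommGroup M] [Module R M]
    [Module.Finite R M]
    (h : ∀ (N : Type v) [AddCommGroup N] [Module R N], Function.Injective (natMap R M N)) :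
    Module.Projective R M := by
  obtain ⟨n, s, hs⟩ := Module.Finite.exists_fin (R := R) (M := M)
  set P := (LinearMap.range (dualTensorHom R M M)).map
    (LinearMap.pi fun i => LinearMap.applyₗ (s i))
  have hP (w : Module.Dual R M) (x : M) : (fun i => w (s i) • x) ∈ P :=
    ⟨_, ⟨w ⊗ₜ x, rfl⟩, by ext; simp⟩
  have : Small.{v} (M →ₗ[R] (Fin n → M) ⧸ P) := Module.Finite.small_linearMap
  have hinj := natMap_injective_of_linearEquiv (Shrink.linearEquiv R _)
    (h (Shrink.{v} (M →ₗ[R] (Fin n → M) ⧸ P)))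
  exact .of_one_mem_range_dualTensorHom
    (one_mem_range_dualTensorHom_of_mem_map hs (mem_of_natMap_injective s P hP hinj))
end

section
/- Let R be a noetherian commutative ring and M an R-module. Then M is universally torsionless if and only if there exist an index set I and an injective R-linear map M → ∏_{i∈I} R whose cokernel is a flat R-module. -/
/-!
If `M` is universally torsionless, testing injectivity of `natMap` on `R ⧸ J`, with `J` the ideal
of values `w m`, shows `m ∈ J • M`. By noetherianity finitely many functionals per `m` suffice, and
together they give an embedding `ι : M → (I → R)` with `ι⁻¹ (J • (I → R)) ≤ J • M` for every ideal
`J`. Over a noetherian ring `N ⊗ (I → R) ≅ (I → N)` for finitely presented `N`, so `I → R` is flat,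
and this purity of `ι` makes its cokernel flat.

Conversely, a flat cokernel makes `N ⊗ M → N ⊗ (I → R)` injective; for finitely generated `N` the
target is `I → N`, where the image of `x` is `natMap x` evaluated at the coordinate functionals of
`ι`. Every element of `M ⊗ N` comes from `M ⊗ N₀` with `N₀` finitely generated.
-/

open TensorProduct

lemma natMap_tmul_s8 {R : Type*} [CommRing R] {M : Type*} [AddCommGroup M] [Module R M]
    {N : Type*} [AddCommGroup N] [Module R N] (m : M) (n : N) (w : Module.Dual R M) :
    natMap R M N (m ⊗ₜ n) w = w m • n := by
  simp [natMap]

universe u v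

lemma Function.Exact.compLeft {R : Type*} [CommRing R] {X Y Z : Type*} [AddCommGroup X] [Module R X]
    [AddCommGroup Y] [Module R Y] [AddCommGroup Z] [Module R Z] {f : X →ₗ[R] Y} {g : Y →ₗ[R] Z}
    (hfg : Function.Exact f g) (I : Type*) :
    Function.Exact (f.compLeft I) (g.compLeft I) := by
  intro y
  constructor
  · intro hy
    choose x hx using fun i => (hfg (y i)).mp (congrFun hy i)
    exact ⟨x, funext hx⟩
  · rintro ⟨x, rfl⟩
    funext i
    exact hfg.apply_apply_eq_zero (x i)

namespace TensorProduct

variable {R : Type*} [CommRing R] (I : Type*)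

lemma compLeft_comp_piScalarRightHom {X Y : Type*} [AddCommGroup X] [Module R X]
    [AddCommGroup Y] [Module R Y] (f : X →ₗ[R] Y) :
    f.compLeft I ∘ₗ piScalarRightHom R R X I = piScalarRightHom R R Y I ∘ₗ f.rTensor (I → R) := by
  ext x g
  simp

lemma piScalarRightHom_bijective_of_finite (κ : Type*) [Finite κ] :
    Function.Bijective (piScalarRightHom R R (κ → R) I) := by
  have := Fintype.ofFinite κ
  classical
  let swap : (κ → I → R) ≃ₗ[R] (I → κ → R) :=
    { Equiv.piComm fun (_ : κ) (_ : I) => R with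
      map_add' := fun _ _ => rfl
      map_smul' := fun _ _ => rfl }
  have h : piScalarRightHom R R (κ → R) I =
      (TensorProduct.comm R _ _ ≪≫ₗ piScalarRight R R (I → R) κ ≪≫ₗ swap).toLinearMap := by
    refine TensorProduct.ext' fun v f => funext₂ fun i j => ?_
    simp [swap, Equiv.piComm, Function.swap, mul_comm]
  rw [h]
  exact LinearEquiv.bijective _

theorem piScalarRightHom_bijective (N : Type*) [AddCommGroup N] [Module R N]
    [Module.FinitePresentation R N] : Function.Bijective (piScalarRightHom R R N I) := by
  obtain ⟨n, m, g, f, hg, hfg⟩ := Module.FinitePresentation.exists_fin' R N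
  exact LinearMap.bijective_of_surjective_of_bijective_of_right_exact
    (f.rTensor (I → R)) (g.rTensor (I → R)) (f.compLeft I) (g.compLeft I)
    (piScalarRightHom R R _ I) (piScalarRightHom R R _ I) (piScalarRightHom R R N I)
    (compLeft_comp_piScalarRightHom I f) (compLeft_comp_piScalarRightHom I g)
    (rTensor_exact _ hfg hg) (hfg.compLeft I)
    (piScalarRightHom_bijective_of_finite I _).surjective
    (piScalarRightHom_bijective_of_finite I _) (LinearMap.rTensor_surjective _ hg)
    hg.comp_left

end TensorProduct

instance Module.Flat.pi_of_isNoetherianRing {R : Type*} [CommRing R] [IsNoetherianRing R]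
    (I : Type*) : Module.Flat R (I → R) := by
  rw [Module.Flat.iff_rTensor_injective']
  intro J
  have : Module.FinitePresentation R J := Module.finitePresentation_of_finite R J
  have hinj : Function.Injective (J.subtype.compLeft I ∘ₗ piScalarRightHom R R J I) :=
    J.injective_subtype.comp_left.comp (piScalarRightHom_bijective I J).injective
  rw [compLeft_comp_piScalarRightHom, LinearMap.coe_comp] at hinj
  exact hinj.of_comp

section Purity

variable {R : Type*} [CommRing R] {M F : Type*} [AddCommGroup M] [Module R M]
  [AddCommGroup F] [Module R F]

lemma lid_rTensor_subtype_lTensor (J : Ideal R) {X Y : Type*} [AddCommGroup X] [Module R X]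
    [AddCommGroup Y] [Module R Y] (g : X →ₗ[R] Y) (z : J ⊗[R] X) :
    TensorProduct.lid R Y (J.subtype.rTensor Y (g.lTensor J z)) =
      g (TensorProduct.lid R X (J.subtype.rTensor X z)) := by
  induction z with
  | zero => simp
  | tmul j x => simp
  | add a b ha hb => simp only [map_add, ha, hb]

theorem Module.Flat.quotient_range_of_comap_smul_top_le [Module.Flat R F] (ι : M →ₗ[R] F)
    (h : ∀ J : Ideal R, (J • ⊤ : Submodule R F).comap ι ≤ J • ⊤) :
    Module.Flat R (F ⧸ LinearMap.range ι) := by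
  rw [Module.Flat.iff_rTensor_injective']
  intro J
  rw [injective_iff_map_eq_zero]
  intro ξ hξ
  set π := (LinearMap.range ι).mkQ
  obtain ⟨η, rfl⟩ := LinearMap.lTensor_surjective J (Submodule.mkQ_surjective _) ξ
  have hπ : π (TensorProduct.lid R F (J.subtype.rTensor F η)) = 0 := by
    rw [← lid_rTensor_subtype_lTensor, hξ, map_zero]
  obtain ⟨m, hm⟩ : TensorProduct.lid R F (J.subtype.rTensor F η) ∈ LinearMap.range ι := by
    rwa [← Submodule.ker_mkQ (LinearMap.range ι), LinearMap.mem_ker]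
  have hmJ : m ∈ J • (⊤ : Submodule R M) := by
    refine h J ?_
    rw [Submodule.mem_comap, hm, ← Submodule.map_range_rTensor_subtype_lid]
    exact Submodule.mem_map_of_mem (LinearMap.mem_range_self _ η)
  rw [← Submodule.map_range_rTensor_subtype_lid] at hmJ
  obtain ⟨_, ⟨θ, rfl⟩, hθ⟩ := hmJ
  have hη : η = ι.lTensor J θ := by
    apply (TensorProduct.lid R F).injective.comp
      (Module.Flat.rTensor_preserves_injective_linearMap _ J.injective_subtype)
    simp only [Function.comp_apply, lid_rTensor_subtype_lTensor]
    exact hm.symm.trans (congrArg ι hθ.symm)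
  rw [hη, ← LinearMap.lTensor_comp_apply, (LinearMap.exact_map_mkQ_range ι).linearMap_comp_eq_zero,
    LinearMap.lTensor_zero, LinearMap.zero_apply]

end Purity

section Content

variable {R : Type*} [CommRing R] {M : Type*} [AddCommGroup M] [Module R M] {I : Type*}

lemma apply_mem_of_mem_smul_top {J : Ideal R} {f : I → R} (hf : f ∈ J • (⊤ : Submodule R (I → R)))
    (i : I) : f i ∈ J :=
  Submodule.smul_induction_on hf (fun _ hr g _ => J.mul_mem_right (g i) hr)
    (fun _ _ => J.add_mem)

variable (ι : M →ₗ[R] (I → R))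

lemma injective_of_forall_mem_span_range_smul_top
    (h : ∀ m, m ∈ Ideal.span (Set.range (ι m)) • (⊤ : Submodule R M)) : Function.Injective ι := by
  rw [injective_iff_map_eq_zero]
  intro m hm
  have hspan : Ideal.span (Set.range (ι m)) = ⊥ := by
    rw [hm, eq_bot_iff, Ideal.span_le]
    rintro _ ⟨i, rfl⟩
    exact Submodule.zero_mem _
  simpa [hspan] using h m

lemma comap_smul_top_le_of_forall_mem_span_range_smul_top
    (h : ∀ m, m ∈ Ideal.span (Set.range (ι m)) • (⊤ : Submodule R M)) (J : Ideal R) :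
    (J • ⊤ : Submodule R (I → R)).comap ι ≤ J • ⊤ := by
  intro m hm
  refine Submodule.smul_mono_left ?_ (h m)
  rw [Ideal.span_le]
  rintro _ ⟨i, rfl⟩
  exact apply_mem_of_mem_smul_top hm i

end Content

section Torsionless

variable {R : Type u} [CommRing R] {M : Type v} [AddCommGroup M] [Module R M]

/-- `R ⧸ annihilator R M` embeds into `AddMonoid.End M`, which lives in `Type v`. -/
lemma small_quotient_of_annihilator_le {J : Ideal R} (hJ : Module.annihilator R M ≤ J) :
    Small.{v} (R ⧸ J) :=
  have : Small.{v} (R ⧸ Module.annihilator R M) :=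
    small_of_injective (RingHom.kerLift_injective (Module.toAddMonoidEnd R M))
  small_of_surjective (Ideal.Quotient.factor_surjective hJ)

/-- The ideal of values `w m` is enlarged by the annihilator, which does not change `J • M`, so that
`R ⧸ J` has a model in `Type v` on which `natMap` can be tested. -/
lemma mem_range_eval_smul_top_of_natMap_injective
    (h : ∀ (N : Type v) [AddCommGroup N] [Module R N], Function.Injective (natMap R M N))
    (m : M) : m ∈ LinearMap.range (Module.Dual.eval R M m) • (⊤ : Submodule R M) := by
  set T := LinearMap.range (Module.Dual.eval R M m)
  set J := T ⊔ Module.annihilator R M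
  have := small_quotient_of_annihilator_le (le_sup_right : Module.annihilator R M ≤ J)
  let e := Shrink.linearEquiv R (R ⧸ J)
  have hzero : m ⊗ₜ[R] e.symm 1 = 0 := by
    refine h _ (LinearMap.ext fun w => ?_)
    have hw : Ideal.Quotient.mk J (w m) = 0 :=
      Ideal.Quotient.eq_zero_iff_mem.mpr (Ideal.mem_sup_left ⟨w, rfl⟩)
    rw [natMap_tmul_s8, ← map_smul, map_zero, LinearMap.zero_apply, ← e.symm.map_zero]
    congr 1
    simpa [Algebra.smul_def] using hw
  have hmJ : m ∈ J • (⊤ : Submodule R M) := by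
    rw [← LinearMap.ker_tensorProductMk, LinearMap.mem_ker, TensorProduct.mk_apply]
    calc (1 : R ⧸ J) ⊗ₜ[R] m = TensorProduct.comm R M _ (e.lTensor M (m ⊗ₜ e.symm 1)) := by simp
      _ = 0 := by rw [hzero, map_zero, map_zero]
  rwa [Submodule.sup_smul, ← Submodule.annihilator_top, Submodule.annihilator_smul,
    sup_bot_eq] at hmJ

end Torsionless

section Forward

variable {R : Type u} [CommRing R] [IsNoetherianRing R] {M : Type v} [AddCommGroup M]
  [Module R M]

/-- The coordinates of `ι` are, for each `m`, finitely many functionals whose values at `m`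
generate the ideal of all values `w m`. -/
lemma exists_pi_forall_mem_span_range_smul_top
    (h : ∀ m : M, m ∈ LinearMap.range (Module.Dual.eval R M m) • (⊤ : Submodule R M)) :
    ∃ (I : Type v) (ι : M →ₗ[R] (I → R)),
      ∀ m, m ∈ Ideal.span (Set.range (ι m)) • (⊤ : Submodule R M) := by
  have hfg : ∀ m : M, ∃ (n : ℕ) (w : Fin n → Module.Dual R M),
      LinearMap.range (Module.Dual.eval R M m) = Ideal.span (Set.range fun k => w k m) := by
    intro m
    obtain ⟨n, s, hs⟩ := Submodule.fg_iff_exists_fin_generating_family.mp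
      (IsNoetherian.noetherian (LinearMap.range (Module.Dual.eval R M m)))
    choose w hw using fun k => (hs ▸ Submodule.subset_span (Set.mem_range_self k) :
      s k ∈ LinearMap.range (Module.Dual.eval R M m))
    refine ⟨n, w, ?_⟩
    rw [← hs]
    congr 2
    funext k
    exact (hw k).symm
  choose n w hw using hfg
  refine ⟨(m : M) × Fin (n m), LinearMap.pi fun i => w i.1 i.2, fun m => ?_⟩
  refine Submodule.smul_mono_left ((hw m).le.trans (Ideal.span_mono ?_)) (h m)
  rintro _ ⟨k, rfl⟩
  exact ⟨⟨m, k⟩, rfl⟩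

theorem exists_injective_flat_quotient_of_natMap_injective
    (h : ∀ (N : Type v) [AddCommGroup N] [Module R N], Function.Injective (natMap R M N)) :
    ∃ (I : Type v) (ι : M →ₗ[R] (I → R)),
      Function.Injective ι ∧ Module.Flat R ((I → R) ⧸ LinearMap.range ι) := by
  obtain ⟨I, ι, hι⟩ :=
    exists_pi_forall_mem_span_range_smul_top (mem_range_eval_smul_top_of_natMap_injective h)
  exact ⟨I, ι, injective_of_forall_mem_span_range_smul_top ι hι,
    Module.Flat.quotient_range_of_comap_smul_top_le ι
      (comap_smul_top_le_of_forall_mem_span_range_smul_top ι hι)⟩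

end Forward

section Backward

variable {R : Type*} [CommRing R] {M : Type*} [AddCommGroup M] [Module R M]

lemma natMap_lTensor_subtype {N : Type*} [AddCommGroup N] [Module R N] (N₀ : Submodule R N)
    (x : M ⊗[R] N₀) (w : Module.Dual R M) :
    natMap R M N (N₀.subtype.lTensor M x) w = natMap R M N₀ x w := by
  induction x with
  | zero => simp
  | tmul m n => simp [natMap_tmul_s8]
  | add a b ha hb => simp only [map_add, LinearMap.add_apply, ha, hb, Submodule.coe_add]

lemma natMap_injective_of_forall_finite {N : Type*} [AddCommGroup N] [Module R N]
    (h : ∀ N₀ : Submodule R N, Module.Finite R N₀ → Function.Injective (natMap R M N₀)) :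
    Function.Injective (natMap R M N) := by
  rw [injective_iff_map_eq_zero]
  intro x hx
  obtain ⟨N₀, hN₀, hxN₀⟩ :=
    TensorProduct.exists_finite_submodule_right_of_setFinite {x} (Set.finite_singleton x)
  obtain ⟨x₀, rfl⟩ := hxN₀ rfl
  have hx₀ : natMap R M N₀ x₀ = 0 :=
    LinearMap.ext fun w => Subtype.ext (by simp [← natMap_lTensor_subtype, hx])
  rw [(injective_iff_map_eq_zero _).mp (h N₀ hN₀) x₀ hx₀, map_zero]

lemma piScalarRightHom_lTensor_comm {I : Type*} (ι : M →ₗ[R] (I → R)) (N : Type*)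
    [AddCommGroup N] [Module R N] (x : M ⊗[R] N) :
    piScalarRightHom R R N I (ι.lTensor N (TensorProduct.comm R M N x)) =
      fun i => natMap R M N x (LinearMap.proj i ∘ₗ ι) := by
  induction x with
  | zero => simp; rfl
  | tmul m n => funext i; simp [natMap_tmul_s8]
  | add a b ha hb => simp only [map_add, ha, hb]; rfl

lemma natMap_injective_of_finite [IsNoetherianRing R] {I : Type*} (ι : M →ₗ[R] (I → R))
    (hι : Function.Injective ι) (hflat : Module.Flat R ((I → R) ⧸ LinearMap.range ι))
    (N : Type*) [AddCommGroup N] [Module R N] [Module.Finite R N] :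
    Function.Injective (natMap R M N) := by
  have := Module.finitePresentation_of_finite R N
  have hinj : Function.Injective fun x : M ⊗[R] N =>
      piScalarRightHom R R N I (ι.lTensor N (TensorProduct.comm R M N x)) :=
    (piScalarRightHom_bijective I N).injective.comp <|
      (LinearMap.lTensor_injective_of_exact_of_flat _ (Submodule.mkQ_surjective _) ι hι
        (LinearMap.exact_map_mkQ_range ι) N).comp (TensorProduct.comm R M N).injective
  intro x y hxy
  apply hinj
  simp only [piScalarRightHom_lTensor_comm, hxy]

end Backward

theorem stmt8 (R : Type u) [CommRing R] [IsNoetherianRing R]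
    (M : Type v) [AddCommGroup M] [Module R M] :
    (∀ (N : Type v) [AddCommGroup N] [Module R N], Function.Injective (natMap R M N)) ↔
      ∃ (I : Type v) (iota : M →ₗ[R] (I → R)),
        Function.Injective iota ∧ Module.Flat R ((I → R) ⧸ LinearMap.range iota) :=
  ⟨exists_injective_flat_quotient_of_natMap_injective, fun ⟨_, ι, hι, hflat⟩ _ _ _ =>
    natMap_injective_of_forall_finite fun N₀ _ => natMap_injective_of_finite ι hι hflat N₀⟩
end

section
/- Let R be a local commutative ring and M an R-module. If M is the directed union of a family of finitely generated free submodules each of which is a direct summand of M, then M is universally torsionless. -/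
/-
For a finite projective module `F`, the natural map `F ⊗ N → Hom(F*, N)` is the composite of
the isomorphisms `F ⊗ N ≅ F** ⊗ N ≅ Hom(F*, N)`. The natural map is natural in the module,
and when `F` is a direct summand of `M` every functional on `F` extends to `M` through the
projection; so an element of `F ⊗ N` whose image in `M ⊗ N` dies in `Hom(M*, N)` already
dies in `Hom(F*, N)`, hence is zero. As the summands `L i` form a directed family exhausting
`M`, every element of `M ⊗ N` comes from some `L i ⊗ N`.
-/

open TensorProduct

open LinearMap

section NatMap

variable (R : Type*) [CommRing R] {M P : Type*} [AddCommGroup M] [Module R M]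
  [AddCommGroup P] [Module R P] (N : Type*) [AddCommGroup N] [Module R N]

@[simp]
lemma natMap_apply_tmul (m : M) (n : N) (w : M →ₗ[R] R) :
    natMap R M N (m ⊗ₜ n) w = w m • n := by
  simp [natMap]

lemma natMap_injective_of_projective [Module.Projective R M] [Module.Finite R M] :
    Function.Injective (natMap R M N) := by
  have heval : Function.Injective (rTensor N (Module.Dual.eval R M)) := by
    rw [← Module.evalEquiv_toLinearMap, ← LinearEquiv.coe_rTensor]
    exact (LinearEquiv.rTensor N (Module.evalEquiv R M)).injective
  exact (dualTensorHom_bijective ..).1.comp heval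

variable {R N}

lemma natMap_rTensor_apply (f : P →ₗ[R] M) (z : P ⊗[R] N) (w : M →ₗ[R] R) :
    natMap R M N (rTensor N f z) w = natMap R P N z (w ∘ₗ f) := by
  induction z using TensorProduct.induction_on with
  | zero => simp
  | tmul p n => simp
  | add a b ha hb => simp only [map_add, LinearMap.add_apply, ha, hb]

lemma natMap_comp_rTensor_injective {f : P →ₗ[R] M} {r : M →ₗ[R] P}
    (hrf : r ∘ₗ f = LinearMap.id) (hP : Function.Injective (natMap R P N)) :
    Function.Injective (natMap R M N ∘ₗ rTensor N f) := by
  intro z z' h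
  refine hP (ext fun w => ?_)
  have hw := LinearMap.congr_fun h (w ∘ₗ r)
  simpa only [comp_apply, natMap_rTensor_apply, comp_assoc, hrf, comp_id] using hw

end NatMap

lemma exists_mem_range_rTensor_subtype_of_directed {R M ι : Type*} [CommSemiring R]
    [AddCommMonoid M] [Module R M] (N : Type*) [AddCommMonoid N] [Module R N] [Nonempty ι]
    {L : ι → Submodule R M} (hdir : Directed (· ≤ ·) L) (hsup : ⨆ i, L i = ⊤)
    (x : M ⊗[R] N) : ∃ i, x ∈ range (rTensor N (L i).subtype) := by
  have hmono : Monotone fun P : Submodule R M => range (rTensor N P.subtype) := by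
    intro P Q hPQ
    dsimp only
    rw [← Submodule.subtype_comp_inclusion P Q hPQ, rTensor_comp, range_comp]
    exact map_le_range
  have htop : ⨆ i, range (rTensor N (L i).subtype) = ⊤ := by
    rw [eq_top_iff, ← span_tmul_eq_top, Submodule.span_le]
    rintro _ ⟨m, n, rfl⟩
    obtain ⟨i, hi⟩ := (Submodule.mem_iSup_of_directed L hdir).1 (hsup ▸ Submodule.mem_top)
    exact Submodule.mem_iSup_of_mem i ⟨⟨m, hi⟩ ⊗ₜ n, rfl⟩
  exact (Submodule.mem_iSup_of_directed _ (hdir.mono_comp _ hmono)).1 (htop ▸ Submodule.mem_top)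

theorem stmt12_general (R : Type u) [CommRing R]
    (M : Type v) [AddCommGroup M] [Module R M]
    (g : Type v) (L : g → Submodule R M)
    (hdir : Directed (· ≤ ·) L)
    (hfg : ∀ i, (L i).FG)
    (hfree : ∀ i, Module.Free R (L i))
    (hds : ∀ i, ∃ L' : Submodule R M, IsCompl (L i) L')
    (hsup : ⨆ i, L i = ⊤) :
    ∀ (N : Type v) [AddCommGroup N] [Module R N], Function.Injective (natMap R M N) := by
  intro N _ _
  cases isEmpty_or_nonempty g with
  | inl _ =>
    have : Subsingleton M := by
      rw [← Submodule.subsingleton_iff R, ← subsingleton_iff_bot_eq_top, ← hsup,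
        iSup_of_empty]
    exact Function.injective_of_subsingleton _
  | inr _ =>
    refine (injective_iff_map_eq_zero _).2 fun x hx => ?_
    obtain ⟨i, y, rfl⟩ := exists_mem_range_rTensor_subtype_of_directed N hdir hsup x
    obtain ⟨L', hcompl⟩ := hds i
    have := Module.Finite.iff_fg.2 (hfg i)
    have := hfree i
    have hinj := natMap_comp_rTensor_injective (f := (L i).subtype)
      (r := (L i).projectionOnto L' hcompl)
      (ext (Submodule.projectionOnto_apply_left hcompl))
      (natMap_injective_of_projective R N)
    rw [(injective_iff_map_eq_zero _).1 hinj y hx, map_zero]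

theorem stmt12 (R : Type u) [CommRing R] [IsLocalRing R]
    (M : Type v) [AddCommGroup M] [Module R M]
    (g : Type v) (L : g → Submodule R M)
    (hdir : Directed (· ≤ ·) L)
    (hfg : ∀ i, (L i).FG)
    (hfree : ∀ i, Module.Free R (L i))
    (hds : ∀ i, ∃ L' : Submodule R M, IsCompl (L i) L')
    (hsup : ⨆ i, L i = ⊤) :
    ∀ (N : Type v) [AddCommGroup N] [Module R N], Function.Injective (natMap R M N) :=
  stmt12_general R M g L hdir hfg hfree hds hsup
end

section
/- Let R be a commutative ring and M a universally torsionless R-module. Then M is a trace module: for every m ∈ M, m lies in the submodule M*(m)·M, where M*(m) is the ideal {w(m) : w ∈ Hom_R(M,R)} of R. -/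
/-!
Put `Q = M*(m)·M` and test universal torsionlessness on `N = Hom(M, M/Q)` with the element
`m ⊗ π`, `π` the quotient map. Its image `w ↦ w(m) • π` vanishes because every `w(m)` lies in
`M*(m)` and so annihilates `M/Q`; hence `m ⊗ π = 0`. Evaluation `M ⊗ Hom(M, M/Q) → M/Q` sends
`m ⊗ π` to the class of `m`, which is therefore zero, i.e. `m ∈ Q`.
-/

open TensorProduct

section

variable {R : Type*} [CommRing R] {M : Type*} [AddCommGroup M] [Module R M]

@[simp]
theorem natMap_tmul_apply {N : Type*} [AddCommGroup N] [Module R N] (m : M) (n : N)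
    (w : Module.Dual R M) : natMap R M N (m ⊗ₜ n) w = w m • n := by
  simp [natMap]

theorem natMap_tmul_mkQ_eq_zero (m : M) :
    natMap R M _
      (m ⊗ₜ (LinearMap.range (Module.Dual.eval R M m) • ⊤ : Submodule R M).mkQ) = 0 := by
  ext w x
  rw [natMap_tmul_apply, LinearMap.smul_apply, Submodule.mkQ_apply, ← Submodule.Quotient.mk_smul,
    LinearMap.zero_apply, LinearMap.zero_apply, Submodule.Quotient.mk_eq_zero]
  exact Submodule.smul_mem_smul ⟨w, rfl⟩ trivial

theorem Submodule.mem_of_tmul_mkQ_eq_zero {Q : Submodule R M} {m : M}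
    (h : m ⊗ₜ[R] Q.mkQ = 0) : m ∈ Q := by
  have := congrArg (TensorProduct.lift (LinearMap.applyₗ (R := R) (M := M) (M₂ := M ⧸ Q))) h
  rwa [map_zero, TensorProduct.lift.tmul, LinearMap.applyₗ_apply_apply, Submodule.mkQ_apply,
    Submodule.Quotient.mk_eq_zero] at this

end

theorem stmt15 (R : Type u) [CommRing R] (M : Type v) [AddCommGroup M] [Module R M]
    (h : ∀ (N : Type v) [AddCommGroup N] [Module R N], Function.Injective (natMap R M N))
    (m : M) :
    m ∈ (LinearMap.range (Module.Dual.eval R M m)) • (⊤ : Submodule R M) := by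
  apply Submodule.mem_of_tmul_mkQ_eq_zero
  apply h
  rw [natMap_tmul_mkQ_eq_zero, map_zero]
end
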